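/- arXiv:1909.13082 — 2 statements merged into one kernel-verified Lean document; each statement's English description precedes it below -/
import Mathlib

section
/- Suppose in addition that Corr(P, Q | ψ†, φ‡; λ) ≤ Corr(P, Q) + ε for some ε ≥ 0. Then the inverse generative property holds: W₂²((∇φ‡)_*Q, P) ≤ ε / (β† − 1/λ). -/
open MeasureTheory ENNReal
open scoped RealInnerProductSpace

/-- Squared Wasserstein-2 distance: infimum over couplings of `∫ ‖x - y‖² / 2`. -/
noncomputable def W2sq {E : Type*} [NormedAddCommGroup E] [MeasurableSpace E]
    (μ ν : Measure E) : ℝ≥0∞ :=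
  ⨅ (π : Measure (E × E)) (_ : IsProbabilityMeasure π)
    (_ : π.map Prod.fst = μ) (_ : π.map Prod.snd = ν),
    ∫⁻ p, ENNReal.ofReal (‖p.1 - p.2‖ ^ 2 / 2) ∂π

/-!
Couple `(∇φ‡)_*Q` with `P = (∇φ*)_*Q` through `Q` itself, via `y ↦ (∇φ‡ y, ∇φ* y)`. Write
`x = ∇φ‡ y` and `s = ∇φ* y`. Strong convexity of `ψ†` gives
`ψ†(s) ≥ ψ†(x) + ⟨∇ψ†(x), s - x⟩ + β†/2 ‖s - x‖²`, and Young's inequality bounds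
`⟨∇ψ†(x) - y, s - x⟩` below by `-λ/2 ‖∇ψ†(x) - y‖² - 1/(2λ) ‖s - x‖²`. Together they show that
the integrand of `Corr(P, Q | ψ†, φ‡; λ) - Corr(P, Q)` dominates `(β† - 1/λ)/2 ‖x - s‖²`
pointwise, so the transport cost of the coupling is at most `ε / (β† - 1/λ)`.
-/

theorem ConvexOn.add_le_of_hasFDerivAt {E : Type*} [NormedAddCommGroup E] [NormedSpace ℝ E]
    {f : E → ℝ} {f' : E →L[ℝ] ℝ} {a : E} (hf : ConvexOn ℝ Set.univ f)
    (hf' : HasFDerivAt f f' a) (b : E) : f a + f' (b - a) ≤ f b := by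
  let L : ℝ →ᵃ[ℝ] E := AffineMap.lineMap a b
  have hderiv : HasDerivAt (f ∘ L) (f' (b - a)) 0 := by
    have hL : HasDerivAt L (b - a) 0 := AffineMap.hasDerivAt_lineMap
    exact hf'.comp_hasDerivAt_of_eq 0 hL (by simp [L])
  have hslope := (hf.comp_affineMap L).le_slope_of_hasDerivAt (Set.mem_univ 0) (Set.mem_univ 1)
    zero_lt_one hderiv
  simp only [slope_def_field, Function.comp_apply, L, AffineMap.lineMap_apply_zero,
    AffineMap.lineMap_apply_one, sub_zero, div_one] at hslope
  linarith

theorem W2sq_map_le_lintegral {Ω E : Type*} [MeasurableSpace Ω] [NormedAddCommGroup E]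
    [MeasurableSpace E] (μ : Measure Ω) [IsProbabilityMeasure μ] {f g : Ω → E}
    (hf : Measurable f) (hg : Measurable g) :
    W2sq (μ.map f) (μ.map g) ≤ ∫⁻ ω, ENNReal.ofReal (‖f ω - g ω‖ ^ 2 / 2) ∂μ := by
  have hfg : Measurable fun ω => (f ω, g ω) := hf.prodMk hg
  have hprob := Measure.isProbabilityMeasure_map (μ := μ) hfg.aemeasurable
  have hfst : (μ.map fun ω => (f ω, g ω)).map Prod.fst = μ.map f := by
    rw [Measure.map_map measurable_fst hfg]; rfl
  have hsnd : (μ.map fun ω => (f ω, g ω)).map Prod.snd = μ.map g := by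
    rw [Measure.map_map measurable_snd hfg]; rfl
  calc W2sq (μ.map f) (μ.map g)
      ≤ ∫⁻ p, ENNReal.ofReal (‖p.1 - p.2‖ ^ 2 / 2) ∂(μ.map fun ω => (f ω, g ω)) :=
        iInf_le_of_le _ <| iInf_le_of_le hprob <| iInf_le_of_le hfst <| iInf_le _ hsnd
    _ ≤ ∫⁻ ω, ENNReal.ofReal (‖f ω - g ω‖ ^ 2 / 2) ∂μ := lintegral_map_le _ _

theorem lintegral_ofReal_le_ofReal_integral {α : Type*} [MeasurableSpace α] {μ : Measure α}
    {f g : α → ℝ} (hg : Integrable g μ) (hg0 : 0 ≤ᵐ[μ] g) (hfg : f ≤ᵐ[μ] g) :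
    ∫⁻ x, ENNReal.ofReal (f x) ∂μ ≤ ENNReal.ofReal (∫ x, g x ∂μ) := by
  rw [ofReal_integral_eq_lintegral_ofReal hg hg0]
  exact lintegral_mono_ae (hfg.mono fun _ hx => ENNReal.ofReal_le_ofReal hx)

section InnerProductSpace

variable {E : Type*} [NormedAddCommGroup E] [InnerProductSpace ℝ E]

theorem neg_young_le_real_inner {lam : ℝ} (hlam : 0 < lam) (v w : E) :
    -(lam / 2 * ‖v‖ ^ 2 + 1 / lam / 2 * ‖w‖ ^ 2) ≤ ⟪v, w⟫ := by
  have hsq : ‖lam • v + w‖ ^ 2 =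
      2 * lam * (⟪v, w⟫ + (lam / 2 * ‖v‖ ^ 2 + 1 / lam / 2 * ‖w‖ ^ 2)) := by
    rw [norm_add_sq_real, norm_smul, real_inner_smul_left, Real.norm_eq_abs, mul_pow, sq_abs]
    field_simp
    ring
  have hnonneg : 0 ≤ ⟪v, w⟫ + (lam / 2 * ‖v‖ ^ 2 + 1 / lam / 2 * ‖w‖ ^ 2) :=
    nonneg_of_mul_nonneg_right (hsq ▸ sq_nonneg _) (by positivity)
  linarith

variable [CompleteSpace E]

theorem add_inner_gradient_add_sq_le_of_convexOn_sub {ψ : E → ℝ} {β : ℝ}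
    (hψ : ConvexOn ℝ Set.univ (fun x => ψ x - β / 2 * ‖x‖ ^ 2)) {a : E}
    (hψa : DifferentiableAt ℝ ψ a) (b : E) :
    ψ a + ⟪gradient ψ a, b - a⟫ + β / 2 * ‖b - a‖ ^ 2 ≤ ψ b := by
  have hderiv := hψa.hasGradientAt.hasFDerivAt.sub
    ((hasStrictFDerivAt_norm_sq a).hasFDerivAt.const_mul (β / 2))
  have key := hψ.add_le_of_hasFDerivAt hderiv b
  simp only [sub_apply, smul_apply,
    InnerProductSpace.toDual_apply_apply, innerSL_apply_apply, smul_eq_mul, nsmul_eq_mul,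
    Nat.cast_ofNat, inner_sub_right, real_inner_self_eq_norm_sq] at key
  rw [norm_sub_sq_real, real_inner_comm a b, inner_sub_right]
  linarith

-- With `x = ∇φ‡ y` and `s = ∇φ* y`, the `Q`-integral of this is
-- `Corr(P, Q | ψ†, φ‡; λ) - Corr(P, Q)`.
noncomputable def regularizedCorrGap (ψ : E → ℝ) (lam : ℝ) (x y s : E) : ℝ :=
  ψ s + (⟪x, y⟫ - ψ x) - ⟪y, s⟫ + lam / 2 * ‖gradient ψ x - y‖ ^ 2

theorem half_mul_norm_sub_sq_le_regularizedCorrGap {ψ : E → ℝ} {β lam : ℝ}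
    (hψ : ConvexOn ℝ Set.univ (fun x => ψ x - β / 2 * ‖x‖ ^ 2)) (hlam : 0 < lam) {x : E}
    (hψx : DifferentiableAt ℝ ψ x) (y s : E) :
    (β - 1 / lam) / 2 * ‖x - s‖ ^ 2 ≤ regularizedCorrGap ψ lam x y s := by
  have hstrong := add_inner_gradient_add_sq_le_of_convexOn_sub hψ hψx s
  have hyoung := neg_young_le_real_inner hlam (gradient ψ x - y) (s - x)
  have hinner : ⟪gradient ψ x - y, s - x⟫ = ⟪gradient ψ x, s - x⟫ - ⟪y, s⟫ + ⟪x, y⟫ := by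
    rw [inner_sub_left, inner_sub_right y, real_inner_comm x y]
    ring
  rw [regularizedCorrGap, norm_sub_rev]
  linarith

theorem measurable_gradient [MeasurableSpace E] [BorelSpace E] (f : E → ℝ) :
    Measurable (gradient f) :=
  (InnerProductSpace.toDual ℝ E).symm.continuous.measurable.comp (measurable_fderiv ℝ f)

variable [MeasurableSpace E] {μ : Measure E} {ψ : E → ℝ} {G S : E → E}

theorem integrable_regularizedCorrGap (hS : Measurable S) (lam : ℝ)
    (hψ : Integrable ψ (μ.map S)) (hG : Integrable (fun y => ⟪G y, y⟫ - ψ (G y)) μ)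
    (hreg : Integrable (fun y => ‖gradient ψ (G y) - y‖ ^ 2) μ)
    (hS_corr : Integrable (fun y => ⟪y, S y⟫) μ) :
    Integrable (fun y => regularizedCorrGap ψ lam (G y) y (S y)) μ :=
  (((hψ.comp_measurable hS).add hG).sub hS_corr).add (hreg.const_mul _)

theorem integral_regularizedCorrGap (hS : Measurable S) (lam : ℝ)
    (hψ : Integrable ψ (μ.map S)) (hG : Integrable (fun y => ⟪G y, y⟫ - ψ (G y)) μ)
    (hreg : Integrable (fun y => ‖gradient ψ (G y) - y‖ ^ 2) μ)
    (hS_corr : Integrable (fun y => ⟪y, S y⟫) μ) :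
    ∫ y, regularizedCorrGap ψ lam (G y) y (S y) ∂μ =
      (∫ x, ψ x ∂(μ.map S)) + (∫ y, (⟪G y, y⟫ - ψ (G y)) ∂μ) - (∫ y, ⟪y, S y⟫ ∂μ)
        + lam / 2 * (∫ y, ‖gradient ψ (G y) - y‖ ^ 2 ∂μ) := by
  have hψS : Integrable (fun y => ψ (S y)) μ := hψ.comp_measurable hS
  rw [integral_map hS.aemeasurable hψ.aestronglyMeasurable]
  simp only [regularizedCorrGap]
  rw [integral_add (by exact (hψS.add hG).sub hS_corr) (hreg.const_mul _),
    integral_sub (by exact hψS.add hG) hS_corr, integral_add hψS hG, integral_const_mul]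

end InnerProductSpace

theorem inverse_generative_property_general {D : ℕ}
    (P Q : Measure (EuclideanSpace ℝ (Fin D)))
    [IsProbabilityMeasure P] [IsProbabilityMeasure Q]
    -- Brenier potentials
    (φs : EuclideanSpace ℝ (Fin D) → ℝ)
    (hQP : Q.map (gradient φs) = P)
    -- discriminators
    (ψd : EuclideanSpace ℝ (Fin D) → ℝ) (hψd : Differentiable ℝ ψd)
    (βd : ℝ) (hβd : 0 < βd)
    (hstrong : ConvexOn ℝ Set.univ (fun x => ψd x - βd / 2 * ‖x‖ ^ 2))
    (φc : EuclideanSpace ℝ (Fin D) → ℝ)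
    (lam : ℝ) (hlam : 1 / βd < lam)
    -- integrability of all the integrals involved
    (hI1 : Integrable ψd P)
    (hI2 : Integrable (fun y => ⟪gradient φc y, y⟫ - ψd (gradient φc y)) Q)
    (hI3 : Integrable (fun y => ‖gradient ψd (gradient φc y) - y‖ ^ 2) Q)
    (hI4 : Integrable (fun y => ⟪y, gradient φs y⟫) Q)
    (ε : ℝ)
    (hclose : (∫ x, ψd x ∂P) + (∫ y, (⟪gradient φc y, y⟫ - ψd (gradient φc y)) ∂Q)
        + lam / 2 * (∫ y, ‖gradient ψd (gradient φc y) - y‖ ^ 2 ∂Q) ≤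
      (∫ y, ⟪y, gradient φs y⟫ ∂Q) + ε) :
    W2sq (Q.map (gradient φc)) P ≤ ENNReal.ofReal (ε / (βd - 1 / lam)) := by
  have hlam0 : 0 < lam := (one_div_pos.mpr hβd).trans hlam
  have hc : 0 < βd - 1 / lam := sub_pos.mpr ((one_div_lt hlam0 hβd).mpr hlam)
  set gap := fun y => regularizedCorrGap ψd lam (gradient φc y) y (gradient φs y)
  have hgap y : (βd - 1 / lam) / 2 * ‖gradient φc y - gradient φs y‖ ^ 2 ≤ gap y :=
    half_mul_norm_sub_sq_le_regularizedCorrGap hstrong hlam0 (hψd _) _ _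
  have hψ : Integrable ψd (Q.map (gradient φs)) := hQP ▸ hI1
  have hgap_int := integrable_regularizedCorrGap (measurable_gradient φs) lam hψ hI2 hI3 hI4
  have hgap_le : ∫ y, gap y ∂Q ≤ ε := by
    rw [integral_regularizedCorrGap (measurable_gradient φs) lam hψ hI2 hI3 hI4, hQP]
    linarith
  rw [← hQP]
  calc W2sq (Q.map (gradient φc)) (Q.map (gradient φs))
      ≤ ∫⁻ y, ENNReal.ofReal (‖gradient φc y - gradient φs y‖ ^ 2 / 2) ∂Q :=
        W2sq_map_le_lintegral Q (measurable_gradient φc) (measurable_gradient φs)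
    _ ≤ ENNReal.ofReal (∫ y, gap y / (βd - 1 / lam) ∂Q) := by
        refine lintegral_ofReal_le_ofReal_integral (hgap_int.div_const _)
          (.of_forall fun y => ?_) (.of_forall fun y => ?_)
        · exact div_nonneg ((by positivity : (0 : ℝ) ≤ _).trans (hgap y)) hc.le
        · rw [le_div_iff₀ hc]
          linarith [hgap y]
    _ ≤ ENNReal.ofReal (ε / (βd - 1 / lam)) := by
        rw [integral_div]
        gcongr

/-- Inverse generative property: if the regularized correlations are `ε`-close to the
true correlations, then `W₂²((∇φ‡)_*Q, P) ≤ ε / (β† - 1/λ)`. -/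
theorem inverse_generative_property {D : ℕ}
    (P Q : Measure (EuclideanSpace ℝ (Fin D)))
    [IsProbabilityMeasure P] [IsProbabilityMeasure Q]
    (hP2 : Integrable (fun x => ‖x‖ ^ 2) P)
    (hQ2 : Integrable (fun y => ‖y‖ ^ 2) Q)
    -- Brenier potentials
    (ψs φs : EuclideanSpace ℝ (Fin D) → ℝ)
    (hψs : Differentiable ℝ ψs) (hψsc : ConvexOn ℝ Set.univ ψs)
    (hφs : Differentiable ℝ φs) (hφsc : ConvexOn ℝ Set.univ φs)
    (hinv : ∀ y, gradient ψs (gradient φs y) = y)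
    (hQP : Q.map (gradient φs) = P)
    (hPQ : P.map (gradient ψs) = Q)
    -- discriminators
    (ψd : EuclideanSpace ℝ (Fin D) → ℝ) (hψd : Differentiable ℝ ψd)
    (βd : ℝ) (hβd : 0 < βd)
    (hstrong : ConvexOn ℝ Set.univ (fun x => ψd x - βd / 2 * ‖x‖ ^ 2))
    (φc : EuclideanSpace ℝ (Fin D) → ℝ) (hφc : Differentiable ℝ φc)
    (hφcc : ConvexOn ℝ Set.univ φc)
    (lam : ℝ) (hlam : 1 / βd < lam)
    -- integrability of all the integrals involved
    (hI1 : Integrable ψd P)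
    (hI2 : Integrable (fun y => ⟪gradient φc y, y⟫ - ψd (gradient φc y)) Q)
    (hI3 : Integrable (fun y => ‖gradient ψd (gradient φc y) - y‖ ^ 2) Q)
    (hI4 : Integrable (fun y => ⟪y, gradient φs y⟫) Q)
    (ε : ℝ) (hε : 0 ≤ ε)
    (hclose : (∫ x, ψd x ∂P) + (∫ y, (⟪gradient φc y, y⟫ - ψd (gradient φc y)) ∂Q)
        + lam / 2 * (∫ y, ‖gradient ψd (gradient φc y) - y‖ ^ 2 ∂Q) ≤
      (∫ y, ⟪y, gradient φs y⟫ ∂Q) + ε) :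
    W2sq (Q.map (gradient φc)) P ≤ ENNReal.ofReal (ε / (βd - 1 / lam)) :=
  inverse_generative_property_general P Q φs hQP ψd hψd βd hβd hstrong φc lam hlam hI1 hI2 hI3 hI4 ε
    hclose
end

section
/- Let P and Q be probability measures on ℝ^D with finite second moments, and let ψ*, φ* : ℝ^D → ℝ be differentiable convex functions such that ∇ψ*(∇φ*(y)) = y for all y and the pushforward of Q under ∇φ* equals P. Let ψ : ℝ^D → ℝ be a differentiable convex function whose gradient is Lipschitz with constant B > 0 and such that ∫ ‖∇ψ(x) − ∇ψ*(x)‖² dP(x) ≤ ε_X, and let φ : ℝ^D → ℝ be a differentiable convex function such that ∫ ‖∇φ(y) − ∇φ*(y)‖² dQ(y) ≤ ε_Y, for some ε_X, ε_Y ≥ 0. Then √(∫ ‖∇ψ(∇φ(y)) − y‖² dQ(y)) ≤ B·√ε_Y + √ε_X. -/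
open MeasureTheory ENNReal
open scoped RealInnerProductSpace

/-! Write `∇ψ(∇φ y) - y = (∇ψ(∇φ y) - ∇ψ(∇φ* y)) + (∇ψ(∇φ* y) - y)` and use Minkowski in
`L²(Q)`. The first term is pointwise at most `B ‖∇φ y - ∇φ* y‖`. Since `∇ψ* ∘ ∇φ* = id`, the
second is `(∇ψ - ∇ψ*) ∘ ∇φ*`, and as `∇φ*` pushes `Q` forward to `P` its `L²(Q)` norm is the
`L²(P)` norm of `∇ψ - ∇ψ*`. -/

theorem measurable_gradient_s16 {F : Type*} [NormedAddCommGroup F] [InnerProductSpace ℝ F]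
    [CompleteSpace F] [MeasurableSpace F] [BorelSpace F] (f : F → ℝ) :
    Measurable (gradient f) :=
  (InnerProductSpace.toDual ℝ F).symm.continuous.measurable.comp (measurable_fderiv ℝ f)

section L2

variable {α E : Type*} [MeasurableSpace α] {μ : Measure α} [NormedAddCommGroup E] {f : α → E}

theorem eLpNorm_two_eq_ofReal_sqrt_integral (hf : Integrable (fun x => ‖f x‖ ^ 2) μ) :
    eLpNorm f 2 μ = ENNReal.ofReal √(∫ x, ‖f x‖ ^ 2 ∂μ) := by
  rw [eLpNorm_eq_lintegral_rpow_enorm_toReal two_ne_zero ofNat_ne_top, Real.sqrt_eq_rpow,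
    ← ENNReal.ofReal_rpow_of_nonneg (integral_nonneg fun x => sq_nonneg _) (by norm_num),
    ofReal_integral_eq_lintegral_ofReal hf (ae_of_all _ fun x => sq_nonneg _)]
  simp [← ofReal_norm, ← ENNReal.ofReal_pow]

theorem eLpNorm_two_le_ofReal_sqrt {ε : ℝ} (hf : Integrable (fun x => ‖f x‖ ^ 2) μ)
    (hε : ∫ x, ‖f x‖ ^ 2 ∂μ ≤ ε) : eLpNorm f 2 μ ≤ ENNReal.ofReal √ε := by
  rw [eLpNorm_two_eq_ofReal_sqrt_integral hf]
  exact ENNReal.ofReal_le_ofReal (Real.sqrt_le_sqrt hε)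

theorem sqrt_integral_norm_sq_le_of_eLpNorm_le {c : ℝ} (hc : 0 ≤ c)
    (h : eLpNorm f 2 μ ≤ ENNReal.ofReal c) : √(∫ x, ‖f x‖ ^ 2 ∂μ) ≤ c := by
  by_cases hf : Integrable (fun x => ‖f x‖ ^ 2) μ
  · rwa [eLpNorm_two_eq_ofReal_sqrt_integral hf, ENNReal.ofReal_le_ofReal_iff hc] at h
  · simpa [integral_undef hf] using hc

theorem eLpNorm_comp_sub_id_eq_map [MeasurableSpace E] [BorelSpace E] [SecondCountableTopology E]
    {F G T : E → E} (hF : Measurable F) (hG : Measurable G) (hT : Measurable T)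
    (hGT : ∀ y, G (T y) = y) (μ : Measure E) (p : ℝ≥0∞) :
    eLpNorm (fun y => F (T y) - y) p μ = eLpNorm (fun x => F x - G x) p (μ.map T) := by
  rw [eLpNorm_map_measure (g := fun x => F x - G x) (hF.sub hG).aestronglyMeasurable
    hT.aemeasurable]
  simp [Function.comp_def, hGT]

end L2

theorem cycle_defect_bound_general {D : ℕ}
    (P Q : Measure (EuclideanSpace ℝ (Fin D)))
    (ψs φs : EuclideanSpace ℝ (Fin D) → ℝ)
    (hinv : ∀ y, gradient ψs (gradient φs y) = y)
    (hQP : Q.map (gradient φs) = P)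
    (ψ : EuclideanSpace ℝ (Fin D) → ℝ)
    (B : ℝ) (hB : 0 < B)
    (hBLip : ∀ x x', ‖gradient ψ x - gradient ψ x'‖ ≤ B * ‖x - x'‖)
    (φ : EuclideanSpace ℝ (Fin D) → ℝ)
    (εX εY : ℝ)
    (hIX : Integrable (fun x => ‖gradient ψ x - gradient ψs x‖ ^ 2) P)
    (hX : (∫ x, ‖gradient ψ x - gradient ψs x‖ ^ 2 ∂P) ≤ εX)
    (hIY : Integrable (fun y => ‖gradient φ y - gradient φs y‖ ^ 2) Q)
    (hY : (∫ y, ‖gradient φ y - gradient φs y‖ ^ 2 ∂Q) ≤ εY) :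
    Real.sqrt (∫ y, ‖gradient ψ (gradient φ y) - y‖ ^ 2 ∂Q) ≤
      B * Real.sqrt εY + Real.sqrt εX := by
  have hψ := measurable_gradient_s16 ψ
  have hφ := measurable_gradient_s16 φ
  have hφs := measurable_gradient_s16 φs
  have hsplit : (fun y => gradient ψ (gradient φ y) - y) =
      (fun y => gradient ψ (gradient φ y) - gradient ψ (gradient φs y)) +
        fun y => gradient ψ (gradient φs y) - y := by
    ext1 y
    exact (sub_add_sub_cancel _ _ _).symm
  refine sqrt_integral_norm_sq_le_of_eLpNorm_le (by positivity) ?_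
  calc eLpNorm (fun y => gradient ψ (gradient φ y) - y) 2 Q
      ≤ eLpNorm (fun y => gradient ψ (gradient φ y) - gradient ψ (gradient φs y)) 2 Q +
          eLpNorm (fun y => gradient ψ (gradient φs y) - y) 2 Q := by
        rw [hsplit]
        exact eLpNorm_add_le (((hψ.comp hφ).sub (hψ.comp hφs)).aestronglyMeasurable)
          (((hψ.comp hφs).sub measurable_id).aestronglyMeasurable) one_le_two
    _ ≤ ENNReal.ofReal B * eLpNorm (fun y => gradient φ y - gradient φs y) 2 Q +
          eLpNorm (fun x => gradient ψ x - gradient ψs x) 2 P :=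
        add_le_add (eLpNorm_le_mul_eLpNorm_of_ae_le_mul (ae_of_all _ fun y => hBLip _ _) 2)
          (hQP ▸ eLpNorm_comp_sub_id_eq_map hψ (measurable_gradient_s16 ψs) hφs hinv Q 2).le
    _ ≤ ENNReal.ofReal B * ENNReal.ofReal √εY + ENNReal.ofReal √εX := by
        gcongr
        exacts [eLpNorm_two_le_ofReal_sqrt hIY hY, eLpNorm_two_le_ofReal_sqrt hIX hX]
    _ = ENNReal.ofReal (B * √εY + √εX) := by
        rw [← ENNReal.ofReal_mul hB.le, ← ENNReal.ofReal_add (by positivity) (by positivity)]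

/-- If `∇ψ` is `ε_X`-close to `∇ψ*` in `L²(P)` and `∇φ` is `ε_Y`-close to `∇φ*` in
`L²(Q)`, with `∇ψ` `B`-Lipschitz, then `√(∫ ‖∇ψ(∇φ(y)) - y‖² dQ) ≤ B√ε_Y + √ε_X`. -/
theorem cycle_defect_bound {D : ℕ}
    (P Q : Measure (EuclideanSpace ℝ (Fin D)))
    [IsProbabilityMeasure P] [IsProbabilityMeasure Q]
    (hP2 : Integrable (fun x => ‖x‖ ^ 2) P)
    (hQ2 : Integrable (fun y => ‖y‖ ^ 2) Q)
    (ψs φs : EuclideanSpace ℝ (Fin D) → ℝ)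
    (hψs : Differentiable ℝ ψs) (hψsc : ConvexOn ℝ Set.univ ψs)
    (hφs : Differentiable ℝ φs) (hφsc : ConvexOn ℝ Set.univ φs)
    (hinv : ∀ y, gradient ψs (gradient φs y) = y)
    (hQP : Q.map (gradient φs) = P)
    (ψ : EuclideanSpace ℝ (Fin D) → ℝ)
    (hψ : Differentiable ℝ ψ) (hψc : ConvexOn ℝ Set.univ ψ)
    (B : ℝ) (hB : 0 < B)
    (hBLip : ∀ x x', ‖gradient ψ x - gradient ψ x'‖ ≤ B * ‖x - x'‖)
    (φ : EuclideanSpace ℝ (Fin D) → ℝ)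
    (hφ : Differentiable ℝ φ) (hφc : ConvexOn ℝ Set.univ φ)
    (εX εY : ℝ) (hεX : 0 ≤ εX) (hεY : 0 ≤ εY)
    (hIX : Integrable (fun x => ‖gradient ψ x - gradient ψs x‖ ^ 2) P)
    (hX : (∫ x, ‖gradient ψ x - gradient ψs x‖ ^ 2 ∂P) ≤ εX)
    (hIY : Integrable (fun y => ‖gradient φ y - gradient φs y‖ ^ 2) Q)
    (hY : (∫ y, ‖gradient φ y - gradient φs y‖ ^ 2 ∂Q) ≤ εY)
    (hIcycle : Integrable (fun y => ‖gradient ψ (gradient φ y) - y‖ ^ 2) Q) :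
    Real.sqrt (∫ y, ‖gradient ψ (gradient φ y) - y‖ ^ 2 ∂Q) ≤
      B * Real.sqrt εY + Real.sqrt εX :=
  cycle_defect_bound_general P Q ψs φs hinv hQP ψ B hB hBLip φ εX εY hIX hX hIY hY
end
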